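/- (Bellman residual bound for Peng's Q(λ) with behavior policy updates.) Fix λ ∈ [0,1] and α ∈ [1−λ, 1]. Let μ_{−1} be an arbitrary policy and Q_0 : X → A → ℝ arbitrary. For each k ≥ 0, let π_k be any policy greedy with respect to Q_k, set μ_k := α π_k + (1−α) μ_{k−1}, and define Q_{k+1} := N_λ^{μ_k,π_k} Q_k + ε_k for arbitrary error functions ε_k : X → A → ℝ. Write ρ_l := λμ_l + (1−λ)π_l, b_l := Q_l − T^{ρ_l} Q_l, and A_l := γ(1−λ)·P^{π_l} ∘ (I − γλP^{μ_l})⁻¹. Then for every k ≥ 0, b_k ≤ A_{k−1}⋯A_0 b_0 + ∑_{l=0}^{k−1} A_{k−1}⋯A_{l+1}((I − γP^{ρ_l}) ε_l) pointwise, where an empty composition of operators is the identity. -/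

import Mathlib

open scoped BigOperators

namespace RLPQL

variable {X A : Type*} [Fintype X] [Fintype A]

/-- `P` is a transition kernel: nonnegative and rows sum to one. -/
def IsKernel (P : X → A → X → ℝ) : Prop :=
  (∀ x a y, 0 ≤ P x a y) ∧ ∀ x a, ∑ y, P x a y = 1

/-- `π` is a (Markov) policy: nonnegative and sums to one over actions. -/
def IsPolicy (π : X → A → ℝ) : Prop :=
  (∀ x a, 0 ≤ π x a) ∧ ∀ x, ∑ a, π x a = 1

/-- `(πQ)(x) = ∑_a π x a * Q x a`. -/
def polQ (π Q : X → A → ℝ) : X → ℝ := fun x => ∑ a, π x a * Q x a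

/-- `(PV)(x,a) = ∑_y P x a y * V y`. -/
def PV (P : X → A → X → ℝ) (V : X → ℝ) : X → A → ℝ := fun x a => ∑ y, P x a y * V y

/-- `P^π Q = P (π Q)`. -/
def Ppol (P : X → A → X → ℝ) (π Q : X → A → ℝ) : X → A → ℝ := PV P (polQ π Q)

/-- Bellman operator `T^π Q = r + γ P^π Q`. -/
def bellman (P : X → A → X → ℝ) (r : X → A → ℝ) (γ : ℝ) (π Q : X → A → ℝ) : X → A → ℝ :=
  fun x a => r x a + γ * Ppol P π Q x a

/-- Bellman optimality operator `(T Q)(x,a) = r x a + γ ∑_y P x a y * max_b Q y b`. -/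
noncomputable def optBellman (P : X → A → X → ℝ) (r : X → A → ℝ) (γ : ℝ) (Q : X → A → ℝ) :
    X → A → ℝ :=
  fun x a => r x a + γ * ∑ y, P x a y * (⨆ b, Q y b)

/-- `π` is greedy with respect to `Q`. -/
def IsGreedy (π Q : X → A → ℝ) : Prop := ∀ x, polQ π Q x = ⨆ a, Q x a

/-- `(I - c P^μ)⁻¹ f = ∑_{t=0}^∞ c^t (P^μ)^t f`. -/
noncomputable def resolvent (P : X → A → X → ℝ) (c : ℝ) (μ : X → A → ℝ) (f : X → A → ℝ) :
    X → A → ℝ :=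
  fun x a => ∑' t : ℕ, c ^ t * ((Ppol P μ)^[t] f) x a

/-- Peng's Q(λ) operator `N_λ^{μ,π} Q = (I - γλ P^μ)⁻¹ (r + γ(1-λ) P^π Q)`. -/
noncomputable def peng (P : X → A → X → ℝ) (r : X → A → ℝ) (γ lam : ℝ) (μ π Q : X → A → ℝ) :
    X → A → ℝ :=
  resolvent P (γ * lam) μ (fun x a => r x a + γ * (1 - lam) * Ppol P π Q x a)

/-- The mixture policy `c·μ + (1-c)·π`. -/
def mixP (c : ℝ) (μ π : X → A → ℝ) : X → A → ℝ := fun x a => c * μ x a + (1 - c) * π x a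

end RLPQL

open RLPQL

namespace RLPQL

/-- `opProd Aop m n = A_{m+n-1} ∘ ⋯ ∘ A_m` (the identity when `n = 0`). -/
def opProd {F : Type*} (Aop : ℕ → F → F) (m : ℕ) : ℕ → F → F
  | 0 => id
  | n + 1 => Aop (m + n) ∘ opProd Aop m n

variable {X A : Type*} [Fintype X] [Fintype A]

/-- The linear operator `A_l := γ(1-λ)·P^{π_l} ∘ (I - γλP^{μ_l})⁻¹`. -/
noncomputable def Aop (P : X → A → X → ℝ) (γ lam : ℝ) (μl πl : X → A → ℝ)
    (f : X → A → ℝ) : X → A → ℝ :=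
  fun x a => γ * (1 - lam) * Ppol P πl (resolvent P (γ * lam) μl f) x a

end RLPQL

/-
`(I - γλP^μ)⁻¹` is the Neumann series of `γλP^μ`, whose operator norm for the sup norm is at most
`γλ < 1`, so it is a bounded linear operator that preserves nonnegativity. Writing `G = N_λ^{μ,π} Q`, one has
`(I - γλP^μ) G = r + γ(1-λ)P^π Q` and `Q - G = (I - γλP^μ)⁻¹ (Q - T^ρ Q)`, and together these give
the exact identity `(G + ε) - T^ρ (G + ε) = A (Q - T^ρ Q) + (I - γP^ρ) ε`. Since `π_{k+1}` is
greedy for `Q_{k+1}` and `α ≥ 0`, replacing `ρ_k` by `ρ_{k+1}` can only raise `T^ρ Q_{k+1}`, so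
`b_{k+1} ≤ A_k b_k + (I - γP^{ρ_k}) ε_k`. The `A_k` are linear and monotone, and unrolling this
recursion gives the bound.
-/

namespace RLPQL

variable {X A : Type*} [Fintype X] [Fintype A]

lemma sum_mul_le_of_sum_eq_one {ι : Type*} [Fintype ι] {w v : ι → ℝ} {B : ℝ}
    (hw : ∀ i, 0 ≤ w i) (hw1 : ∑ i, w i = 1) (hv : ∀ i, v i ≤ B) : ∑ i, w i * v i ≤ B :=
  calc ∑ i, w i * v i ≤ ∑ i, w i * B :=
        Finset.sum_le_sum fun i _ => mul_le_mul_of_nonneg_left (hv i) (hw i)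
    _ = B := by rw [← Finset.sum_mul, hw1, one_mul]

lemma abs_sum_mul_le_of_sum_eq_one {ι : Type*} [Fintype ι] {w v : ι → ℝ} {B : ℝ}
    (hw : ∀ i, 0 ≤ w i) (hw1 : ∑ i, w i = 1) (hv : ∀ i, |v i| ≤ B) : |∑ i, w i * v i| ≤ B := by
  refine abs_le.2 ⟨?_, sum_mul_le_of_sum_eq_one hw hw1 fun i => (le_abs_self _).trans (hv i)⟩
  have := sum_mul_le_of_sum_eq_one (v := fun i => -v i) hw hw1 fun i => (neg_le_abs _).trans (hv i)
  simp only [mul_neg, Finset.sum_neg_distrib] at this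
  linarith

section Operators

variable {P : X → A → X → ℝ} {μ π : X → A → ℝ}

omit [Fintype A] in
lemma PV_mono (hP : IsKernel P) : Monotone (PV P) := fun _ _ h x a =>
  Finset.sum_le_sum fun y _ => mul_le_mul_of_nonneg_left (h y) (hP.1 x a y)

omit [Fintype X] in
lemma polQ_mono (hμ : IsPolicy μ) : Monotone (polQ μ) := fun _ _ h x =>
  Finset.sum_le_sum fun a _ => mul_le_mul_of_nonneg_left (h x a) (hμ.1 x a)

lemma Ppol_mono (hP : IsKernel P) (hμ : IsPolicy μ) : Monotone (Ppol P μ) :=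
  (PV_mono hP).comp (polQ_mono hμ)

lemma abs_Ppol_le (hP : IsKernel P) (hμ : IsPolicy μ) {f : X → A → ℝ} {B : ℝ}
    (hf : ∀ x a, |f x a| ≤ B) (x : X) (a : A) : |Ppol P μ f x a| ≤ B :=
  abs_sum_mul_le_of_sum_eq_one (hP.1 x a) (hP.2 x a) fun y =>
    abs_sum_mul_le_of_sum_eq_one (hμ.1 y) (hμ.2 y) (hf y)

variable (P μ) in
noncomputable def ppolCLM : (X → A → ℝ) →L[ℝ] (X → A → ℝ) :=
  LinearMap.toContinuousLinearMap
    { toFun := Ppol P μ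
      map_add' := fun f g => by
        funext x a
        simp only [Ppol, PV, polQ, Pi.add_apply, mul_add, Finset.sum_add_distrib]
      map_smul' := fun s f => by
        funext x a
        simp only [Ppol, PV, polQ, Pi.smul_apply, smul_eq_mul, RingHom.id_apply, Finset.mul_sum]
        exact Finset.sum_congr rfl fun _ _ => Finset.sum_congr rfl fun _ _ => by ring }

@[simp]
lemma ppolCLM_apply (f : X → A → ℝ) : ppolCLM P μ f = Ppol P μ f := rfl

lemma norm_ppolCLM_le_one (hP : IsKernel P) (hμ : IsPolicy μ) : ‖ppolCLM P μ‖ ≤ 1 := by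
  refine ContinuousLinearMap.opNorm_le_bound _ zero_le_one fun f => ?_
  rw [one_mul, pi_norm_le_iff_of_nonneg (norm_nonneg f)]
  intro x
  rw [pi_norm_le_iff_of_nonneg (norm_nonneg f)]
  intro a
  refine abs_Ppol_le hP hμ (fun y b => ?_) x a
  exact (norm_le_pi_norm (f y) b).trans (norm_le_pi_norm f y)

end Operators

section Resolvent

variable {P : X → A → X → ℝ} {c : ℝ} {μ : X → A → ℝ}

variable (P c μ) in
/-- The Neumann series of `c P^μ`; it is `(I - c P^μ)⁻¹` only when `|c| < 1`. -/
noncomputable def neumannCLM : (X → A → ℝ) →L[ℝ] (X → A → ℝ) :=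
  ∑' t : ℕ, (c • ppolCLM P μ) ^ t

lemma norm_smul_ppolCLM_lt_one (hP : IsKernel P) (hμ : IsPolicy μ) (hc : |c| < 1) :
    ‖c • ppolCLM P μ‖ < 1 :=
  calc ‖c • ppolCLM P μ‖ = |c| * ‖ppolCLM P μ‖ := by rw [norm_smul, Real.norm_eq_abs]
    _ ≤ |c| * 1 := mul_le_mul_of_nonneg_left (norm_ppolCLM_le_one hP hμ) (abs_nonneg c)
    _ < 1 := by rwa [mul_one]

lemma resolvent_eq_neumannCLM (hP : IsKernel P) (hμ : IsPolicy μ) (hc : |c| < 1) :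
    resolvent P c μ = neumannCLM P c μ := by
  funext f x a
  let eval : ((X → A → ℝ) →L[ℝ] (X → A → ℝ)) →L[ℝ] ℝ :=
    (ContinuousLinearMap.proj (R := ℝ) (φ := fun _ : A => ℝ) a).comp
      ((ContinuousLinearMap.proj (R := ℝ) (φ := fun _ : X => A → ℝ) x).comp
        (ContinuousLinearMap.apply ℝ _ f))
  have hs := summable_geometric_of_norm_lt_one (norm_smul_ppolCLM_lt_one hP hμ hc)
  refine Eq.trans (tsum_congr fun t => ?_) (eval.map_tsum hs).symm
  show c ^ t * ((Ppol P μ)^[t] f) x a = ((c • ppolCLM P μ) ^ t) f x a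
  rw [smul_pow, smul_apply, FunLike.coe_pow_eq_iterate]
  rfl

lemma resolvent_sub_smul_Ppol (hP : IsKernel P) (hμ : IsPolicy μ) (hc : |c| < 1)
    (f : X → A → ℝ) : resolvent P c μ f - c • Ppol P μ (resolvent P c μ f) = f := by
  have h := congrArg (fun T => T f) (mul_neg_geom_series _ (norm_smul_ppolCLM_lt_one hP hμ hc))
  simpa [resolvent_eq_neumannCLM hP hμ hc, neumannCLM] using h

lemma resolvent_sub_smul_Ppol_self (hP : IsKernel P) (hμ : IsPolicy μ) (hc : |c| < 1)
    (f : X → A → ℝ) : resolvent P c μ (f - c • Ppol P μ f) = f := by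
  have h := congrArg (fun T => T f) (geom_series_mul_neg _ (norm_smul_ppolCLM_lt_one hP hμ hc))
  simpa [resolvent_eq_neumannCLM hP hμ hc, neumannCLM] using h

lemma resolvent_nonneg (hP : IsKernel P) (hμ : IsPolicy μ) (hc : 0 ≤ c) {f : X → A → ℝ}
    (hf : 0 ≤ f) : 0 ≤ resolvent P c μ f := by
  have hzero : ∀ t, (Ppol P μ)^[t] 0 = 0 :=
    Function.iterate_fixed (map_zero (ppolCLM P μ))
  intro x a
  refine tsum_nonneg fun t => mul_nonneg (pow_nonneg hc t) ?_
  simpa [hzero] using ((Ppol_mono hP hμ).iterate t hf) x a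

lemma monotone_neumannCLM (hP : IsKernel P) (hμ : IsPolicy μ) (hc0 : 0 ≤ c) (hc1 : c < 1) :
    Monotone (neumannCLM P c μ) := by
  rw [monotone_iff_map_nonneg]
  intro f hf
  rw [← resolvent_eq_neumannCLM hP hμ (abs_lt.2 ⟨by linarith, hc1⟩)]
  exact resolvent_nonneg hP hμ hc0 hf

end Resolvent

section Mixtures

variable {P : X → A → X → ℝ} {c : ℝ} {μ π : X → A → ℝ}

omit [Fintype X] in
lemma IsPolicy.mixP (hc0 : 0 ≤ c) (hc1 : c ≤ 1) (hμ : IsPolicy μ) (hπ : IsPolicy π) :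
    IsPolicy (mixP c μ π) := by
  refine ⟨fun x a => add_nonneg (mul_nonneg hc0 (hμ.1 x a))
    (mul_nonneg (sub_nonneg.2 hc1) (hπ.1 x a)), fun x => ?_⟩
  simp only [RLPQL.mixP, Finset.sum_add_distrib, ← Finset.mul_sum, hμ.2 x, hπ.2 x]
  ring

omit [Fintype X] in
lemma polQ_mixP (c : ℝ) (μ π Q : X → A → ℝ) (x : X) :
    polQ (mixP c μ π) Q x = c * polQ μ Q x + (1 - c) * polQ π Q x := by
  simp only [polQ, RLPQL.mixP, add_mul, Finset.sum_add_distrib, Finset.mul_sum, mul_assoc]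

lemma Ppol_mixP (c : ℝ) (μ π Q : X → A → ℝ) :
    Ppol P (mixP c μ π) Q = c • Ppol P μ Q + (1 - c) • Ppol P π Q := by
  funext x a
  simp only [Ppol, PV, polQ_mixP, Pi.add_apply, Pi.smul_apply, smul_eq_mul, mul_add,
    Finset.sum_add_distrib, Finset.mul_sum]
  congr 1 <;> exact Finset.sum_congr rfl fun _ _ => by ring

end Mixtures

section Greedy

variable {P : X → A → X → ℝ} {lam α : ℝ} {μ π π' Q : X → A → ℝ}

omit [Fintype X] in
lemma polQ_le_iSup (hπ : IsPolicy π) (Q : X → A → ℝ) (x : X) : polQ π Q x ≤ ⨆ a, Q x a :=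
  sum_mul_le_of_sum_eq_one (hπ.1 x) (hπ.2 x) fun a => le_ciSup (Set.finite_range _).bddAbove a

omit [Fintype X] in
lemma polQ_mixP_le_of_isGreedy (hμ : IsPolicy μ) (hπ : IsPolicy π) (hg : IsGreedy π' Q)
    (hlam0 : 0 ≤ lam) (hlam1 : lam ≤ 1) (hα : 0 ≤ α) :
    polQ (mixP lam μ π) Q ≤ polQ (mixP lam (mixP α π' μ) π') Q := by
  intro x
  have hm := polQ_le_iSup hμ Q x
  have hp := polQ_le_iSup hπ Q x
  simp only [polQ_mixP, hg x]
  nlinarith [mul_nonneg (mul_nonneg hlam0 hα) (sub_nonneg.2 hm),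
    mul_nonneg (sub_nonneg.2 hlam1) (sub_nonneg.2 hp)]

lemma bellman_mixP_le_of_isGreedy (hP : IsKernel P) (r : X → A → ℝ) {γ : ℝ} (hγ : 0 ≤ γ)
    (hμ : IsPolicy μ) (hπ : IsPolicy π) (hg : IsGreedy π' Q)
    (hlam0 : 0 ≤ lam) (hlam1 : lam ≤ 1) (hα : 0 ≤ α) :
    bellman P r γ (mixP lam μ π) Q ≤ bellman P r γ (mixP lam (mixP α π' μ) π') Q := fun x a =>
  add_le_add_right (mul_le_mul_of_nonneg_left
    (PV_mono hP (polQ_mixP_le_of_isGreedy hμ hπ hg hlam0 hlam1 hα) x a) hγ) _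

end Greedy

section Peng

variable {P : X → A → X → ℝ} {γ lam : ℝ} {μ π : X → A → ℝ}

lemma abs_mul_lt_one (hγ0 : 0 ≤ γ) (hγ1 : γ < 1) (hlam0 : 0 ≤ lam) (hlam1 : lam ≤ 1) :
    |γ * lam| < 1 := by
  rw [abs_of_nonneg (mul_nonneg hγ0 hlam0)]
  nlinarith

variable (P γ lam μ π) in
noncomputable def aopCLM : (X → A → ℝ) →L[ℝ] (X → A → ℝ) :=
  (γ * (1 - lam)) • (ppolCLM P π).comp (neumannCLM P (γ * lam) μ)

lemma Aop_eq_aopCLM (hP : IsKernel P) (hμ : IsPolicy μ) (hγ0 : 0 ≤ γ) (hγ1 : γ < 1)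
    (hlam0 : 0 ≤ lam) (hlam1 : lam ≤ 1) : Aop P γ lam μ π = aopCLM P γ lam μ π := by
  funext f
  rw [aopCLM, smul_apply, ContinuousLinearMap.comp_apply,
    ← resolvent_eq_neumannCLM hP hμ (abs_mul_lt_one hγ0 hγ1 hlam0 hlam1)]
  rfl

lemma monotone_aopCLM (hP : IsKernel P) (hμ : IsPolicy μ) (hπ : IsPolicy π) (hγ0 : 0 ≤ γ)
    (hγ1 : γ < 1) (hlam0 : 0 ≤ lam) (hlam1 : lam ≤ 1) : Monotone (aopCLM P γ lam μ π) :=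
  fun _ _ h => smul_le_smul_of_nonneg_left
    (Ppol_mono hP hπ (monotone_neumannCLM hP hμ (mul_nonneg hγ0 hlam0) (by nlinarith) h))
    (mul_nonneg hγ0 (sub_nonneg.2 hlam1))

lemma peng_add_sub_bellman (hP : IsKernel P) (hμ : IsPolicy μ) (hγ0 : 0 ≤ γ) (hγ1 : γ < 1)
    (hlam0 : 0 ≤ lam) (hlam1 : lam ≤ 1) (r Q ε : X → A → ℝ) :
    peng P r γ lam μ π Q + ε - bellman P r γ (mixP lam μ π) (peng P r γ lam μ π Q + ε)
      = Aop P γ lam μ π (Q - bellman P r γ (mixP lam μ π) Q)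
        + (ε - γ • Ppol P (mixP lam μ π) ε) := by
  have hc := abs_mul_lt_one hγ0 hγ1 hlam0 hlam1
  set G := peng P r γ lam μ π Q
  have hG : G - (γ * lam) • Ppol P μ G = r + (γ * (1 - lam)) • Ppol P π Q :=
    resolvent_sub_smul_Ppol hP hμ hc _
  have hQG : Q - bellman P r γ (mixP lam μ π) Q
      = (Q - (γ * lam) • Ppol P μ Q) - (r + (γ * (1 - lam)) • Ppol P π Q) := by
    change _ - (r + γ • _) = _
    rw [Ppol_mixP]
    module
  have hres : resolvent P (γ * lam) μ (Q - bellman P r γ (mixP lam μ π) Q) = Q - G := by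
    rw [hQG, resolvent_eq_neumannCLM hP hμ hc, map_sub, ← resolvent_eq_neumannCLM hP hμ hc,
      resolvent_sub_smul_Ppol_self hP hμ hc]
    rfl
  change _ - (r + γ • _) = (γ * (1 - lam)) • Ppol P π (resolvent P (γ * lam) μ _) + _
  rw [hres, Ppol_mixP, Ppol_mixP]
  simp only [← ppolCLM_apply, map_add, map_sub] at hG ⊢
  linear_combination (norm := module) hG

lemma peng_sub_bellman_le_of_isGreedy {α : ℝ} {π' : X → A → ℝ} (hP : IsKernel P)
    (hμ : IsPolicy μ) (hπ : IsPolicy π) (r Q ε : X → A → ℝ)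
    (hg : IsGreedy π' (peng P r γ lam μ π Q + ε))
    (hγ0 : 0 ≤ γ) (hγ1 : γ < 1) (hlam0 : 0 ≤ lam) (hlam1 : lam ≤ 1) (hα : 0 ≤ α) :
    peng P r γ lam μ π Q + ε
        - bellman P r γ (mixP lam (mixP α π' μ) π') (peng P r γ lam μ π Q + ε)
      ≤ Aop P γ lam μ π (Q - bellman P r γ (mixP lam μ π) Q)
        + (ε - γ • Ppol P (mixP lam μ π) ε) := by
  rw [← peng_add_sub_bellman hP hμ hγ0 hγ1 hlam0 hlam1]
  exact sub_le_sub_left (bellman_mixP_le_of_isGreedy hP r hγ0 hμ hπ hg hlam0 hlam1 hα) _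

end Peng

lemma opProd_sub_eq_comp {F : Type*} (T : ℕ → F → F) {l k : ℕ} (hlk : l < k) :
    opProd T (l + 1) (k - l) = T k ∘ opProd T (l + 1) (k - 1 - l) := by
  obtain ⟨n, rfl⟩ := Nat.exists_eq_add_of_lt hlk
  rw [show l + n + 1 - l = n + 1 by omega, show l + n + 1 - 1 - l = n by omega, opProd]
  congr 2
  omega

lemma le_opProd_add_sum_of_le_succ {F G : Type*} [AddCommMonoid F] [PartialOrder F]
    [IsOrderedAddMonoid F] [FunLike G F F] [AddMonoidHomClass G F F] (T : ℕ → G)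
    (hT : ∀ l, Monotone (T l)) {b e : ℕ → F} (hb : ∀ k, b (k + 1) ≤ T k (b k) + e k) (k : ℕ) :
    b k ≤ opProd (fun l => T l) 0 k (b 0)
      + ∑ l ∈ Finset.range k, opProd (fun l => T l) (l + 1) (k - 1 - l) (e l) := by
  induction k with
  | zero => simp [opProd]
  | succ k ih =>
    have hsum : ∑ l ∈ Finset.range k, opProd (fun l => T l) (l + 1) (k - l) (e l)
        = T k (∑ l ∈ Finset.range k, opProd (fun l => T l) (l + 1) (k - 1 - l) (e l)) := by
      rw [map_sum]
      exact Finset.sum_congr rfl fun l hl => by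
        rw [opProd_sub_eq_comp _ (Finset.mem_range.1 hl), Function.comp_apply]
    calc b (k + 1) ≤ T k (b k) + e k := hb k
      _ ≤ T k (opProd (fun l => T l) 0 k (b 0)
            + ∑ l ∈ Finset.range k, opProd (fun l => T l) (l + 1) (k - 1 - l) (e l)) + e k :=
        add_le_add_left (hT k ih) _
      _ = _ := by
        rw [Finset.sum_range_succ, Nat.add_sub_cancel, Nat.sub_self, hsum, map_add, add_assoc]
        simp only [opProd, zero_add, Function.comp_apply, id]

end RLPQL

theorem peng_bellman_residual_bound_policy_updates_general {X A : Type*} [Fintype X] [Fintype A]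
    (P : X → A → X → ℝ) (r : X → A → ℝ) (γ lam α : ℝ)
    (hP : IsKernel P) (hγ0 : 0 ≤ γ) (hγ1 : γ < 1) (hlam0 : 0 ≤ lam) (hlam1 : lam ≤ 1)
    (hα0 : 1 - lam ≤ α) (hα1 : α ≤ 1)
    (μinit : X → A → ℝ) (hμinit : IsPolicy μinit)
    (Qseq πseq μseq : ℕ → X → A → ℝ) (ε : ℕ → X → A → ℝ)
    (hπpol : ∀ k, IsPolicy (πseq k)) (hπgreedy : ∀ k, IsGreedy (πseq k) (Qseq k))
    (hμ0 : μseq 0 = mixP α (πseq 0) μinit)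
    (hμs : ∀ k, μseq (k + 1) = mixP α (πseq (k + 1)) (μseq k))
    (hrec : ∀ k, Qseq (k + 1) = peng P r γ lam (μseq k) (πseq k) (Qseq k) + ε k) :
    ∀ k : ℕ,
      Qseq k - bellman P r γ (mixP lam (μseq k) (πseq k)) (Qseq k)
        ≤ opProd (fun l => Aop P γ lam (μseq l) (πseq l)) 0 k
              (Qseq 0 - bellman P r γ (mixP lam (μseq 0) (πseq 0)) (Qseq 0))
            + ∑ l ∈ Finset.range k,
                opProd (fun l => Aop P γ lam (μseq l) (πseq l)) (l + 1) (k - 1 - l)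
                (fun x a => ε l x a - γ * Ppol P (mixP lam (μseq l) (πseq l)) (ε l) x a) := by
  have hα : 0 ≤ α := by linarith
  have hμpol : ∀ k, IsPolicy (μseq k) := by
    intro k
    induction k with
    | zero => exact hμ0 ▸ (hπpol 0).mixP hα hα1 hμinit
    | succ k ih => exact hμs k ▸ (hπpol (k + 1)).mixP hα hα1 ih
  have hA : ∀ l, Aop P γ lam (μseq l) (πseq l) = aopCLM P γ lam (μseq l) (πseq l) :=
    fun l => Aop_eq_aopCLM hP (hμpol l) hγ0 hγ1 hlam0 hlam1
  simp only [hA]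
  refine le_opProd_add_sum_of_le_succ _
    (fun l => monotone_aopCLM hP (hμpol l) (hπpol l) hγ0 hγ1 hlam0 hlam1) fun k => ?_
  rw [← hA, hμs k, hrec k]
  exact peng_sub_bellman_le_of_isGreedy hP (hμpol k) (hπpol k) _ _ _
    (hrec k ▸ hπgreedy (k + 1)) hγ0 hγ1 hlam0 hlam1 hα

/-- Bellman residual bound for Peng's Q(λ) with behavior policy updates:
with `b_l := Q_l - T^{ρ_l} Q_l`, `ρ_l = λμ_l+(1-λ)π_l`, `A_l = γ(1-λ)P^{π_l}∘(I-γλP^{μ_l})⁻¹`,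
`b_k ≤ A_{k-1}⋯A_0 b_0 + ∑_{l<k} A_{k-1}⋯A_{l+1} ((I - γP^{ρ_l}) ε_l)` pointwise. -/
theorem peng_bellman_residual_bound_policy_updates {X A : Type*} [Fintype X] [Fintype A]
    [Nonempty X] [Nonempty A]
    (P : X → A → X → ℝ) (r : X → A → ℝ) (γ lam α : ℝ)
    (hP : IsKernel P) (hγ0 : 0 ≤ γ) (hγ1 : γ < 1) (hlam0 : 0 ≤ lam) (hlam1 : lam ≤ 1)
    (hα0 : 1 - lam ≤ α) (hα1 : α ≤ 1)
    (μinit : X → A → ℝ) (hμinit : IsPolicy μinit)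
    (Qseq πseq μseq : ℕ → X → A → ℝ) (ε : ℕ → X → A → ℝ)
    (hπpol : ∀ k, IsPolicy (πseq k)) (hπgreedy : ∀ k, IsGreedy (πseq k) (Qseq k))
    (hμ0 : μseq 0 = mixP α (πseq 0) μinit)
    (hμs : ∀ k, μseq (k + 1) = mixP α (πseq (k + 1)) (μseq k))
    (hrec : ∀ k, Qseq (k + 1) = peng P r γ lam (μseq k) (πseq k) (Qseq k) + ε k) :
    ∀ k : ℕ,
      Qseq k - bellman P r γ (mixP lam (μseq k) (πseq k)) (Qseq k)
        ≤ opProd (fun l => Aop P γ lam (μseq l) (πseq l)) 0 k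
              (Qseq 0 - bellman P r γ (mixP lam (μseq 0) (πseq 0)) (Qseq 0))
            + ∑ l ∈ Finset.range k,
                opProd (fun l => Aop P γ lam (μseq l) (πseq l)) (l + 1) (k - 1 - l)
                (fun x a => ε l x a - γ * Ppol P (mixP lam (μseq l) (πseq l)) (ε l) x a) :=
  peng_bellman_residual_bound_policy_updates_general P r γ lam α hP hγ0 hγ1 hlam0 hlam1 hα0 hα1
    μinit hμinit Qseq πseq μseq ε hπpol hπgreedy hμ0 hμs hrec
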